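/- arXiv:gr-qc/0208092 — 2 statements merged into one kernel-verified Lean document; each statement's English description precedes it below -/
import Mathlib

section
/- In Minkowski space, the null hyperplane containing a null line ℓ equals the boundary of the timelike future of ℓ, and also equals the boundary of the timelike past of ℓ: Π = ∂I⁺(ℓ) = ∂I⁻(ℓ). -/
open scoped BigOperators

/-- The Minkowski bilinear form on `Fin n → ℝ`:
`η(u,v) = -u₀v₀ + Σᵢ₌₁ uᵢvᵢ = (Σᵢ uᵢvᵢ) - 2 u₀v₀`. -/
def eta (n : ℕ) [NeZero n] (u v : Fin n → ℝ) : ℝ :=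
  (∑ i, u i * v i) - 2 * u 0 * v 0

/-!
Both chronological sets of the line `ℓ = p + ℝ v` are open half-spaces bounded by `Π`:
`I⁺(ℓ) = {x | η(x - p, v) < 0}` and `I⁻(ℓ) = {x | 0 < η(x - p, v)}`. Since `v` is null,
`η(x - a, v)` does not depend on `a ∈ ℓ`, and by reverse Cauchy–Schwarz it is negative when
`x - a` is future timelike. Conversely `η(x - p - t v, x - p - t v) = η(x - p, x - p) - 2t η(x - p, v)`
is affine in `t`, so moving `a = p + t v` far enough along `ℓ` makes `x - a` timelike with the
right time orientation. Finally, the affine function `η(· - p, v)` is an open map, so the boundary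
of each half-space is its zero set `Π`.
-/

open Filter Finset

theorem IsOpenMap.of_add_smul {E : Type*} [TopologicalSpace E] [AddCommGroup E] [Module ℝ E]
    [ContinuousAdd E] [ContinuousSMul ℝ E] {f : E → ℝ} {d : E} {b : ℝ} (hb : b ≠ 0)
    (hf : ∀ x (c : ℝ), f (x + c • d) = f x + c * b) : IsOpenMap f :=
  IsOpenMap.of_sections fun x =>
    ⟨fun y => x + ((y - f x) / b) • d, by fun_prop, by simp,
      fun y => by rw [hf]; field_simp; ring⟩

theorem frontier_setOf_lt_of_isOpenMap {X : Type*} [TopologicalSpace X] {f : X → ℝ}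
    (hf : Continuous f) (hfo : IsOpenMap f) (c : ℝ) :
    frontier {x | f x < c} = {x | f x = c} := by
  have h := hfo.preimage_frontier_eq_frontier_preimage hf (Set.Iio c)
  rw [frontier_Iio] at h
  exact h.symm

theorem frontier_setOf_gt_of_isOpenMap {X : Type*} [TopologicalSpace X] {f : X → ℝ}
    (hf : Continuous f) (hfo : IsOpenMap f) (c : ℝ) :
    frontier {x | c < f x} = {x | f x = c} := by
  have h := hfo.preimage_frontier_eq_frontier_preimage hf (Set.Ioi c)
  rw [frontier_Ioi] at h
  exact h.symm

def timelikeFuture (n : ℕ) [NeZero n] (A : Set (Fin n → ℝ)) : Set (Fin n → ℝ) :=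
  {x | ∃ a ∈ A, eta n (x - a) (x - a) < 0 ∧ a 0 < x 0}

def timelikePast (n : ℕ) [NeZero n] (A : Set (Fin n → ℝ)) : Set (Fin n → ℝ) :=
  {x | ∃ a ∈ A, eta n (x - a) (x - a) < 0 ∧ x 0 < a 0}

section Minkowski

variable {n : ℕ} [NeZero n]

theorem eta_eq_dotProduct (u v : Fin n → ℝ) : eta n u v = dotProduct u v - 2 * u 0 * v 0 :=
  rfl

theorem eta_add_left (u w z : Fin n → ℝ) : eta n (u + w) z = eta n u z + eta n w z := by
  simp only [eta_eq_dotProduct, add_dotProduct, Pi.add_apply]; ring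

theorem eta_smul_left (c : ℝ) (u z : Fin n → ℝ) : eta n (c • u) z = c * eta n u z := by
  simp only [eta_eq_dotProduct, smul_dotProduct, Pi.smul_apply, smul_eq_mul]; ring

theorem eta_neg_left (u z : Fin n → ℝ) : eta n (-u) z = -eta n u z := by
  simp only [eta_eq_dotProduct, neg_dotProduct, Pi.neg_apply]; ring

theorem eta_neg_neg (u : Fin n → ℝ) : eta n (-u) (-u) = eta n u u := by
  simp only [eta_eq_dotProduct, neg_dotProduct, dotProduct_neg, Pi.neg_apply]; ring

theorem eta_sub_smul_self (w v : Fin n → ℝ) (t : ℝ) :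
    eta n (w - t • v) (w - t • v) = eta n w w - 2 * t * eta n w v + t ^ 2 * eta n v v := by
  simp only [eta_eq_dotProduct, sub_dotProduct, dotProduct_sub, smul_dotProduct, dotProduct_smul,
    dotProduct_comm v w, Pi.sub_apply, Pi.smul_apply, smul_eq_mul]
  ring

theorem eta_single_zero_left (v : Fin n → ℝ) : eta n (Pi.single 0 1) v = -v 0 := by
  simp only [eta_eq_dotProduct, single_dotProduct, Pi.single_eq_same]; ring

theorem continuous_eta_left (v : Fin n → ℝ) : Continuous fun u => eta n u v := by
  unfold eta; fun_prop

theorem eta_eq_sum_erase_zero (u v : Fin n → ℝ) :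
    eta n u v = ∑ i ∈ univ.erase 0, u i * v i - u 0 * v 0 := by
  rw [eta, ← add_sum_erase _ _ (mem_univ 0)]; ring

/-- Reverse Cauchy–Schwarz: the spatial parts satisfy `|u⃗ · v⃗| ≤ |u⃗| |v⃗| < |u₀ v₀|`. -/
theorem eta_neg_of_timelike_of_causal {u v : Fin n → ℝ} (hu : eta n u u < 0)
    (hv : eta n v v ≤ 0) (huv : 0 < u 0 * v 0) : eta n u v < 0 := by
  rw [eta_eq_sum_erase_zero] at hu hv ⊢
  set s := univ.erase (0 : Fin n)
  simp only [← sq] at hu hv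
  have hcs := sum_mul_sq_le_sq_mul_sq s u v
  have hu_nonneg : 0 ≤ ∑ i ∈ s, u i ^ 2 := sum_nonneg fun i _ => sq_nonneg _
  have hv0 : 0 < v 0 ^ 2 := by have := right_ne_zero_of_mul huv.ne'; positivity
  have hsq : (∑ i ∈ s, u i * v i) ^ 2 < (u 0 * v 0) ^ 2 :=
    calc (∑ i ∈ s, u i * v i) ^ 2 ≤ (∑ i ∈ s, u i ^ 2) * ∑ i ∈ s, v i ^ 2 := hcs
      _ ≤ (∑ i ∈ s, u i ^ 2) * v 0 ^ 2 := by gcongr; linarith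
      _ < u 0 ^ 2 * v 0 ^ 2 := by gcongr; linarith
      _ = (u 0 * v 0) ^ 2 := by ring
  linarith [(abs_lt_of_sq_lt_sq' hsq huv.le).2]

theorem eta_sub_add_smul_left {v : Fin n → ℝ} (hv : eta n v v = 0) (x p : Fin n → ℝ) (t : ℝ) :
    eta n (x - (p + t • v)) v = eta n (x - p) v := by
  rw [sub_add_eq_sub_sub, sub_eq_add_neg _ (t • v), ← neg_smul, eta_add_left, eta_smul_left, hv,
    mul_zero, add_zero]

theorem mem_timelikeFuture_line_iff {p v x : Fin n → ℝ} (hv : eta n v v = 0) (hv0 : 0 < v 0) :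
    x ∈ timelikeFuture n {y | ∃ t : ℝ, y = p + t • v} ↔ eta n (x - p) v < 0 := by
  constructor
  · rintro ⟨_, ⟨t, rfl⟩, htime, hlt⟩
    have hu0 : 0 < (x - (p + t • v)) 0 * v 0 := mul_pos (by simpa using hlt) hv0
    rw [← eta_sub_add_smul_left hv x p t]
    exact eta_neg_of_timelike_of_causal htime hv.le hu0
  · intro hxv
    have hq : ∀ᶠ t in atBot, t * (-2 * eta n (x - p) v) < -eta n (x - p) (x - p) :=
      (tendsto_id.atBot_mul_const (by linarith)).eventually_lt_atBot _
    have ht : ∀ᶠ t in atBot, t * v 0 < (x - p) 0 :=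
      (tendsto_id.atBot_mul_const hv0).eventually_lt_atBot _
    obtain ⟨t, hq, ht⟩ := (hq.and ht).exists
    refine ⟨p + t • v, ⟨t, rfl⟩, ?_, ?_⟩
    · rw [show x - (p + t • v) = x - p - t • v by abel, eta_sub_smul_self, hv]
      linarith
    · simp only [Pi.sub_apply, Pi.add_apply, Pi.smul_apply, smul_eq_mul] at ht ⊢
      linarith

theorem mem_timelikePast_line_iff {p v x : Fin n → ℝ} (hv : eta n v v = 0) (hv0 : 0 < v 0) :
    x ∈ timelikePast n {y | ∃ t : ℝ, y = p + t • v} ↔ 0 < eta n (x - p) v := by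
  constructor
  · rintro ⟨_, ⟨t, rfl⟩, htime, hlt⟩
    have hu0 : 0 < (-(x - (p + t • v))) 0 * v 0 := mul_pos (by simpa using hlt) hv0
    have := eta_neg_of_timelike_of_causal (by rwa [eta_neg_neg]) hv.le hu0
    rw [eta_neg_left, eta_sub_add_smul_left hv x p t] at this
    linarith
  · intro hxv
    have hq : ∀ᶠ t in atTop, eta n (x - p) (x - p) < t * (2 * eta n (x - p) v) :=
      (tendsto_id.atTop_mul_const (by linarith)).eventually_gt_atTop _
    have ht : ∀ᶠ t in atTop, (x - p) 0 < t * v 0 :=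
      (tendsto_id.atTop_mul_const hv0).eventually_gt_atTop _
    obtain ⟨t, hq, ht⟩ := (hq.and ht).exists
    refine ⟨p + t • v, ⟨t, rfl⟩, ?_, ?_⟩
    · rw [show x - (p + t • v) = x - p - t • v by abel, eta_sub_smul_self, hv]
      linarith
    · simp only [Pi.sub_apply, Pi.add_apply, Pi.smul_apply, smul_eq_mul] at ht ⊢
      linarith

theorem isOpenMap_eta_sub_left {p v : Fin n → ℝ} (hv0 : v 0 ≠ 0) :
    IsOpenMap fun x => eta n (x - p) v :=
  IsOpenMap.of_add_smul (d := Pi.single 0 1) (neg_ne_zero.2 hv0) fun x c => by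
    rw [add_sub_right_comm, eta_add_left, eta_smul_left, eta_single_zero_left]

end Minkowski

theorem null_hyperplane_eq_boundaries_general (n : ℕ) [NeZero n]
    (p v : Fin n → ℝ) (hnull : eta n v v = 0) (hfut : 0 < v 0) :
    ({x | eta n (x - p) v = 0} =
      frontier {x | ∃ a ∈ {y | ∃ t : ℝ, y = p + t • v},
        eta n (x - a) (x - a) < 0 ∧ a 0 < x 0}) ∧
    ({x | eta n (x - p) v = 0} =
      frontier {x | ∃ a ∈ {y | ∃ t : ℝ, y = p + t • v},
        eta n (x - a) (x - a) < 0 ∧ x 0 < a 0}) := by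
  have hg : Continuous fun x => eta n (x - p) v :=
    (continuous_eta_left v).comp (continuous_id.sub continuous_const)
  have hgo : IsOpenMap fun x => eta n (x - p) v := isOpenMap_eta_sub_left hfut.ne'
  have hfuture : timelikeFuture n {y | ∃ t : ℝ, y = p + t • v} = {x | eta n (x - p) v < 0} :=
    Set.ext fun _ => mem_timelikeFuture_line_iff hnull hfut
  have hpast : timelikePast n {y | ∃ t : ℝ, y = p + t • v} = {x | 0 < eta n (x - p) v} :=
    Set.ext fun _ => mem_timelikePast_line_iff hnull hfut
  constructor
  · change _ = frontier (timelikeFuture n _)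
    rw [hfuture, frontier_setOf_lt_of_isOpenMap hg hgo]
  · change _ = frontier (timelikePast n _)
    rw [hpast, frontier_setOf_gt_of_isOpenMap hg hgo]

/-- In Minkowski space the null hyperplane containing a null line `ℓ` equals
the boundary of the timelike future of `ℓ`, and also the boundary of the
timelike past of `ℓ`: `Π = ∂I⁺(ℓ) = ∂I⁻(ℓ)`. -/
theorem null_hyperplane_eq_boundaries (n : ℕ) [NeZero n] (hn : 3 ≤ n)
    (p v : Fin n → ℝ) (hnull : eta n v v = 0) (hfut : 0 < v 0) :
    ({x | eta n (x - p) v = 0} =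
      frontier {x | ∃ a ∈ {y | ∃ t : ℝ, y = p + t • v},
        eta n (x - a) (x - a) < 0 ∧ a 0 < x 0}) ∧
    ({x | eta n (x - p) v = 0} =
      frontier {x | ∃ a ∈ {y | ∃ t : ℝ, y = p + t • v},
        eta n (x - a) (x - a) < 0 ∧ x 0 < a 0}) :=
  null_hyperplane_eq_boundaries_general n p v hnull hfut
end

section
/- Let φ : M → N be a local isometry of connected Riemannian (or smooth) manifolds such that every geodesic of N starting at a point in the image of φ lifts through φ (i.e., for x ∈ M and any geodesic γ̄ of N with γ̄(0) = φ(x), there is a geodesic γ in M with γ(0) = x and φ∘γ = γ̄ on the domain of γ̄). If N is connected by broken geodesics, then φ is surjective. -/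
/-- Abstract surjectivity of a local isometry: if every geodesic of `N`
starting at a point of the image of `φ` lifts through `φ`, and `N` is
connected by broken geodesics, then `φ` is surjective. -/
theorem local_isometry_surjective (M N : Type*) [Nonempty M] (φ : M → N)
    (isGeo : (ℝ → N) → Prop)
    (hlift : ∀ (x : M) (g : ℝ → N), isGeo g → g 0 = φ x →
      ∃ γ : ℝ → M, γ 0 = x ∧ φ ∘ γ = g)
    (hconn : ∀ a b : N, ∃ (k : ℕ) (z : ℕ → N), z 0 = a ∧ z k = b ∧
      ∀ i < k, ∃ g : ℝ → N, isGeo g ∧ g 0 = z i ∧ g 1 = z (i + 1)) :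
    Function.Surjective φ := by
  obtain ⟨x0⟩ := ‹Nonempty M›
  intro b
  obtain ⟨k, z, hz0, hzk, hstep⟩ := hconn (φ x0) b
  suffices h : ∀ j ≤ k, ∃ x : M, φ x = z j by
    obtain ⟨x, hx⟩ := h k le_rfl
    exact ⟨x, hx.trans hzk⟩
  intro j hj
  induction j with
  | zero => exact ⟨x0, hz0.symm⟩
  | succ i ih =>
    obtain ⟨x, hx⟩ := ih (Nat.le_of_succ_le hj)
    obtain ⟨g, hg, hg0, hg1⟩ := hstep i (Nat.lt_of_succ_le hj)
    obtain ⟨γ, _, hφγ⟩ := hlift x g hg (by rw [hg0, hx])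
    exact ⟨γ 1, by have := congrFun hφγ 1; simp [Function.comp] at this; rw [this, hg1]⟩
end
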